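/- arXiv:1909.02854 — 4 statements merged into one kernel-verified Lean document; each statement's English description precedes it below -/
import Mathlib

section
/- Let Ω be a countably infinite set and r a measure representation over Ω. If E and F are prefix-free subsets of Ω* with [E]≺ ⊆ [F]≺ (every infinite sequence with a prefix in E has a prefix in F), then Σ_{σ∈E} r(σ) ≤ Σ_{σ∈F} r(σ). -/
/-
Work with `m σ := ENNReal.ofReal (r σ)` and, for a set `S` of strings, with
`massIn m S σ = ∑_{τ ∈ S} m([σ]≺ ∩ [τ]≺)`, the mass of `[S]≺` inside `[σ]≺` when `S` is
prefix-free. Both `m` and `massIn m S` split as sums over the one-letter extensions of `σ`.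
Splitting repeatedly shows `massIn m S σ ≤ m σ` for prefix-free `S`. If moreover
`[σ]≺ ⊆ [S]≺`, equality holds: a strict inequality would pass to some child of `σ`, and
following such children forever yields a sequence in `[σ]≺` without a prefix in `S`.
Therefore `∑_E m ≤ ∑_{σ ∈ E} massIn m F σ = ∑_{τ ∈ F} massIn m E τ ≤ ∑_F m`.
-/

open scoped ENNReal

/-- A set of finite strings is prefix-free. -/
def prefixFree {Γ : Type*} (E : Set (List Γ)) : Prop :=
  ∀ σ ∈ E, ∀ τ ∈ E, σ <+: τ → σ = τ

/-- The prefix of length `n` of an infinite sequence. -/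
def pre {Γ : Type*} (α : ℕ → Γ) (n : ℕ) : List Γ := List.ofFn fun i : Fin n => α i

/-- The open set generated by a set of strings: sequences having some prefix in `S`. -/
def cyl {Γ : Type*} (S : Set (List Γ)) : Set (ℕ → Γ) := {α | ∃ n, pre α n ∈ S}

/-- `r` is a measure representation over `Ω`: values in `[0,1]` and
`r σ = ∑_{a ∈ Ω} r (σ a)` for every string `σ`. -/
def MeasRep {Ω : Type*} (r : List Ω → ℝ) : Prop :=
  (∀ σ, 0 ≤ r σ ∧ r σ ≤ 1) ∧ ∀ σ : List Ω, HasSum (fun a : Ω => r (σ ++ [a])) (r σ)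

lemma prefixFree.mono {Γ : Type*} {S T : Set (List Γ)} (hST : S ⊆ T) (hT : prefixFree T) :
    prefixFree S :=
  fun σ hσ τ hτ => hT σ (hST hσ) τ (hST hτ)

lemma MeasRep.ofReal_eq_tsum {Ω : Type*} {r : List Ω → ℝ} (hr : MeasRep r) (σ : List Ω) :
    ENNReal.ofReal (r σ) = ∑' a, ENNReal.ofReal (r (σ ++ [a])) := by
  rw [← ENNReal.ofReal_tsum_of_nonneg (fun a => (hr.1 _).1) (hr.2 σ).summable, (hr.2 σ).tsum_eq]

namespace PrefixMass

variable {Ω : Type*}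

lemma eq_of_prefix_of_prefix {σ τ : List Ω} (h₁ : σ <+: τ) (h₂ : τ <+: σ) : σ = τ :=
  h₁.eq_of_length (h₁.length_le.antisymm h₂.length_le)

lemma snoc_prefix_iff {σ τ : List Ω} {a : Ω} :
    σ ++ [a] <+: τ ↔ σ <+: τ ∧ τ[σ.length]? = some a := by
  constructor
  · intro h
    refine ⟨(List.prefix_append σ [a]).trans h, ?_⟩
    simpa using List.prefix_iff_getElem?.1 h σ.length (by simp)
  · rintro ⟨⟨_ | ⟨b, t⟩, rfl⟩, hb⟩
    · simp at hb
    · obtain rfl : b = a := by simpa using hb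
      exact ⟨t, by simp⟩

lemma pre_succ (α : ℕ → Ω) (n : ℕ) : pre α (n + 1) = pre α n ++ [α n] := by
  rw [pre, pre, List.ofFn_succ_last]
  rfl

lemma length_pre (α : ℕ → Ω) (n : ℕ) : (pre α n).length = n :=
  List.length_ofFn

lemma pre_prefix_pre (α : ℕ → Ω) {m n : ℕ} (h : m ≤ n) : pre α m <+: pre α n := by
  induction h with
  | refl => exact List.prefix_refl _
  | step _ ih => rw [pre_succ]; exact ih.trans (List.prefix_append _ _)

lemma mem_cyl_singleton {α : ℕ → Ω} {σ : List Ω} : α ∈ cyl {σ} ↔ pre α σ.length = σ := by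
  refine ⟨?_, fun h => ⟨_, h⟩⟩
  rintro ⟨n, rfl : pre α n = σ⟩
  rw [length_pre]

lemma cyl_mono {S T : Set (List Ω)} (h : S ⊆ T) : cyl S ⊆ cyl T :=
  fun _ ⟨n, hn⟩ => ⟨n, h hn⟩

lemma exists_pre_forall_of_exists_snoc {P : List Ω → Prop} {σ : List Ω} (hσ : P σ)
    (hP : ∀ τ, P τ → ∃ a, P (τ ++ [a])) :
    ∃ α : ℕ → Ω, pre α σ.length = σ ∧ ∀ n, P (pre α (σ.length + n)) := by
  choose next hnext using fun τ : {τ // P τ} => hP τ.1 τ.2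
  let s : ℕ → {τ // P τ} := fun n => (fun τ => ⟨τ.1 ++ [next τ], hnext τ⟩)^[n] ⟨σ, hσ⟩
  let α : ℕ → Ω := fun i => if h : i < σ.length then σ[i] else next (s (i - σ.length))
  have hpre : ∀ n, pre α (σ.length + n) = (s n).1 := by
    intro n
    induction n with
    | zero =>
      refine List.ext_getElem (length_pre _ _) fun i hi _ => ?_
      simp [pre, α, s]
    | succ n ih =>
      rw [← add_assoc, pre_succ, ih]
      simp [α, s, Function.iterate_succ_apply']
  exact ⟨α, hpre 0, fun n => hpre n ▸ (s n).2⟩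

variable (m : List Ω → ℝ≥0∞)

-- The mass of `[σ]≺ ∩ [τ]≺`: two cylinders are either nested or disjoint.
open Classical in
noncomputable def massInter (σ τ : List Ω) : ℝ≥0∞ :=
  if σ <+: τ then m τ else if τ <+: σ then m σ else 0

lemma massInter_comm (σ τ : List Ω) : massInter m σ τ = massInter m τ σ := by
  unfold massInter
  split_ifs with h₁ h₂ <;> first | rfl | rw [eq_of_prefix_of_prefix h₁ h₂]

lemma massInter_of_prefix {σ τ : List Ω} (h : τ <+: σ) : massInter m σ τ = m σ := by
  unfold massInter
  split_ifs with h'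
  · rw [eq_of_prefix_of_prefix h' h]
  · rfl

lemma massInter_of_prefix_left {σ τ : List Ω} (h : σ <+: τ) : massInter m σ τ = m τ := by
  rw [massInter_comm, massInter_of_prefix m h]

lemma massInter_of_not_prefix {σ τ : List Ω} (h₁ : ¬ σ <+: τ) (h₂ : ¬ τ <+: σ) :
    massInter m σ τ = 0 := by
  simp only [massInter, h₁, h₂, if_false]

lemma massInter_snoc_of_not_prefix {σ τ : List Ω} {a : Ω} (h : ¬ τ <+: σ)
    (ha : ¬ σ ++ [a] <+: τ) : massInter m (σ ++ [a]) τ = 0 := by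
  refine massInter_of_not_prefix m ha fun hτ => ?_
  rcases List.prefix_concat_iff.1 hτ with rfl | hτσ
  exacts [ha (List.prefix_refl _), h hτσ]

lemma massInter_eq_tsum_snoc (hm : ∀ σ, m σ = ∑' a, m (σ ++ [a])) (σ τ : List Ω) :
    massInter m σ τ = ∑' a, massInter m (σ ++ [a]) τ := by
  by_cases hτσ : τ <+: σ
  · rw [massInter_of_prefix m hτσ, hm σ]
    exact tsum_congr fun a =>
      (massInter_of_prefix m (hτσ.trans (List.prefix_append _ _))).symm
  by_cases hστ : σ <+: τ
  · have hlt : σ.length < τ.length := hστ.length_le.lt_of_ne fun h =>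
      hτσ (hστ.eq_of_length h ▸ List.prefix_refl _)
    have hchild : σ ++ [τ[σ.length]] <+: τ :=
      snoc_prefix_iff.2 ⟨hστ, List.getElem?_eq_getElem hlt⟩
    rw [massInter_of_prefix_left m hστ, tsum_eq_single τ[σ.length]]
    · exact (massInter_of_prefix_left m hchild).symm
    · refine fun a ha => massInter_snoc_of_not_prefix m hτσ fun h => ha ?_
      simpa [List.getElem?_eq_getElem hlt] using (snoc_prefix_iff.1 h).2.symm
  · rw [massInter_of_not_prefix m hστ hτσ, eq_comm, ENNReal.tsum_eq_zero]
    exact fun a =>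
      massInter_snoc_of_not_prefix m hτσ fun h => hστ ((List.prefix_append _ _).trans h)

noncomputable def massIn (S : Set (List Ω)) (σ : List Ω) : ℝ≥0∞ :=
  ∑' τ : S, massInter m σ τ

variable {m}

lemma massIn_eq_tsum_snoc (hm : ∀ σ, m σ = ∑' a, m (σ ++ [a])) (S : Set (List Ω))
    (σ : List Ω) : massIn m S σ = ∑' a, massIn m S (σ ++ [a]) := by
  simp only [massIn]
  rw [ENNReal.tsum_comm]
  exact tsum_congr fun τ => massInter_eq_tsum_snoc m hm σ τ

lemma massIn_of_prefix {S : Set (List Ω)} (hS : prefixFree S) {σ τ : List Ω} (hτS : τ ∈ S)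
    (hτσ : τ <+: σ) : massIn m S σ = m σ := by
  rw [massIn, tsum_eq_single ⟨τ, hτS⟩, massInter_of_prefix m hτσ]
  rintro ⟨τ', hτ'S⟩ hne
  have hne' : τ' ≠ τ := fun h => hne (Subtype.ext h)
  refine massInter_of_not_prefix m (fun hστ' => hne' ?_) (fun hτ'σ => hne' ?_)
  · exact (hS τ hτS τ' hτ'S (hτσ.trans hστ')).symm
  · rcases List.prefix_or_prefix_of_prefix hτ'σ hτσ with h | h
    exacts [hS τ' hτ'S τ hτS h, (hS τ hτS τ' hτ'S h).symm]

lemma massIn_le_of_length_le (hm : ∀ σ, m σ = ∑' a, m (σ ++ [a])) {S : Set (List Ω)}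
    (hS : prefixFree S) (n : ℕ) (σ : List Ω) (hlen : ∀ τ ∈ S, τ.length ≤ σ.length + n) :
    massIn m S σ ≤ m σ := by
  induction n generalizing σ with
  | zero =>
    by_cases hp : ∃ τ ∈ S, τ <+: σ
    · obtain ⟨τ, hτS, hτσ⟩ := hp
      exact (massIn_of_prefix hS hτS hτσ).le
    · refine (ENNReal.tsum_eq_zero.2 fun ⟨τ, hτS⟩ => ?_).trans_le zero_le
      have hτσ : ¬ τ <+: σ := fun h => hp ⟨τ, hτS, h⟩
      refine massInter_of_not_prefix m (fun hστ => hτσ ?_) hτσ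
      rw [hστ.eq_of_length (hστ.length_le.antisymm (hlen τ hτS))]
  | succ n ih =>
    rw [massIn_eq_tsum_snoc hm, hm σ]
    exact ENNReal.tsum_le_tsum fun a => ih _ fun τ hτ => by
      have := hlen τ hτ
      simp only [List.length_append, List.length_singleton]
      omega

lemma massIn_le (hm : ∀ σ, m σ = ∑' a, m (σ ++ [a])) {S : Set (List Ω)} (hS : prefixFree S)
    (σ : List Ω) : massIn m S σ ≤ m σ := by
  rw [massIn, ENNReal.tsum_eq_iSup_sum]
  refine iSup_le fun s => ?_
  set T := s.map (Function.Embedding.subtype _)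
  have hTS : (T : Set (List Ω)) ⊆ S := fun τ hτ => by
    obtain ⟨x, -, rfl⟩ := Finset.mem_map.1 hτ
    exact x.2
  calc ∑ τ ∈ s, massInter m σ τ = massIn m T σ := by
        rw [massIn, Finset.tsum_subtype', Finset.sum_map]; rfl
    _ ≤ m σ := massIn_le_of_length_le hm (hS.mono hTS) (T.sup List.length) σ
        fun τ hτ => (Finset.le_sup (f := List.length) hτ).trans (Nat.le_add_left _ _)

lemma tsum_le_of_prefixFree (hm : ∀ σ, m σ = ∑' a, m (σ ++ [a])) {S : Set (List Ω)}
    (hS : prefixFree S) : ∑' τ : S, m τ ≤ m [] := by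
  simpa [massIn, massInter] using massIn_le hm hS []

lemma le_massIn_of_cyl_subset (hm : ∀ σ, m σ = ∑' a, m (σ ++ [a])) {S : Set (List Ω)}
    (hS : prefixFree S) {σ : List Ω} (h : cyl {σ} ⊆ cyl S) : m σ ≤ massIn m S σ := by
  by_contra hlt
  obtain ⟨α, hασ, hbad⟩ := exists_pre_forall_of_exists_snoc (P := fun τ => massIn m S τ < m τ)
    (not_le.1 hlt) fun τ hτ => by
      by_contra! hchildren
      rw [massIn_eq_tsum_snoc hm, hm τ] at hτ
      exact (ENNReal.tsum_le_tsum hchildren).not_gt hτ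
  obtain ⟨n, hn⟩ := h (mem_cyl_singleton.2 hασ)
  have hlt := hbad n
  rw [massIn_of_prefix hS hn (pre_prefix_pre α (Nat.le_add_left n _))] at hlt
  exact lt_irrefl _ hlt

theorem tsum_le_tsum_of_cyl_subset (hm : ∀ σ, m σ = ∑' a, m (σ ++ [a]))
    {E F : Set (List Ω)} (hE : prefixFree E) (hF : prefixFree F) (h : cyl E ⊆ cyl F) :
    ∑' σ : E, m σ ≤ ∑' τ : F, m τ :=
  calc ∑' σ : E, m σ ≤ ∑' σ : E, massIn m F σ := ENNReal.tsum_le_tsum fun σ =>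
        le_massIn_of_cyl_subset hm hF ((cyl_mono (Set.singleton_subset_iff.2 σ.2)).trans h)
    _ = ∑' τ : F, ∑' σ : E, massInter m σ τ := ENNReal.tsum_comm
    _ ≤ ∑' τ : F, m τ := ENNReal.tsum_le_tsum fun τ =>
        (tsum_congr fun _ => massInter_comm m _ _).trans_le (massIn_le hm hE τ)

end PrefixMass

open PrefixMass in
theorem stmt2_general {Ω : Type*} (r : List Ω → ℝ)
    (hr : MeasRep r) (E F : Set (List Ω)) (hE : prefixFree E) (hF : prefixFree F)
    (h : cyl E ⊆ cyl F) :
    ∑' σ : E, r (σ : List Ω) ≤ ∑' σ : F, r (σ : List Ω) := by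
  have htoReal (S : Set (List Ω)) :
      ∑' σ : S, r σ = (∑' σ : S, ENNReal.ofReal (r σ)).toReal := by
    rw [ENNReal.tsum_toReal_eq fun _ => ENNReal.ofReal_ne_top]
    exact tsum_congr fun σ => (ENNReal.toReal_ofReal (hr.1 σ).1).symm
  have hfin : ∑' τ : F, ENNReal.ofReal (r τ) ≠ ∞ :=
    ((tsum_le_of_prefixFree hr.ofReal_eq_tsum hF).trans_lt ENNReal.ofReal_lt_top).ne
  rw [htoReal, htoReal]
  exact ENNReal.toReal_mono hfin (tsum_le_tsum_of_cyl_subset hr.ofReal_eq_tsum hE hF h)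

/-- If `E`, `F` are prefix-free and `[E]≺ ⊆ [F]≺`, then
`∑_{σ ∈ E} r σ ≤ ∑_{σ ∈ F} r σ`. -/
theorem stmt2 {Ω : Type*} [Countable Ω] [Infinite Ω] (r : List Ω → ℝ)
    (hr : MeasRep r) (E F : Set (List Ω)) (hE : prefixFree E) (hF : prefixFree F)
    (h : cyl E ⊆ cyl F) :
    ∑' σ : E, r (σ : List Ω) ≤ ∑' σ : F, r (σ : List Ω) :=
  stmt2_general r hr E F hE hF h
end

section
/- Let Ω be a countably infinite set and r a measure representation over Ω. For the outer measure μ_r induced by r, every Borel subset of Ω^∞ is μ_r-measurable (Carathéodory measurable); in particular, every basic open cylinder [σ]≺ is μ_r-measurable. -/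
open scoped ENNReal

/-- The outer measure induced by a measure representation `r`:
`μ_r C` is the infimum of `r(A)` over open sets `A ⊇ C`, where every open set is
generated by a prefix-free set. -/
noncomputable def muR {Ω : Type*} (r : List Ω → ℝ) (C : Set (ℕ → Ω)) : ℝ≥0∞ :=
  ⨅ (E : Set (List Ω)) (_ : prefixFree E) (_ : C ⊆ cyl E),
    ∑' σ : E, ENNReal.ofReal (r (σ : List Ω))

/-- The Borel σ-field on `Ω^∞`, generated by the open sets `[S]≺`. -/
def borelSeq (Ω : Type*) : MeasurableSpace (ℕ → Ω) :=
  MeasurableSpace.generateFrom {A | ∃ S : Set (List Ω), A = cyl S}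

/-!
`μ_r` is an outer measure: covers of countably many sets combine into a cover of their union,
and passing to its prefix-minimal strings makes it prefix-free without increasing its weight.
To split an arbitrary cover `E` of `C` along a cylinder `[σ]`, replace every string of `E`
shorter than `σ` by all its extensions of length `|σ|`; by the additivity of `r` this does not
increase the weight, and afterwards every string of the cover lies either inside `[σ]` or
outside it. So each `[σ]` is Carathéodory measurable, and so is every open set `[S]≺`, being a
countable union of such cylinders.
-/

open MeasureTheory

section Strings

variable {Γ : Type*}

@[simp] lemma mem_cyl {α : ℕ → Γ} {S : Set (List Γ)} : α ∈ cyl S ↔ ∃ n, pre α n ∈ S := Iff.rfl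

@[simp] lemma length_pre (α : ℕ → Γ) (n : ℕ) : (pre α n).length = n := by
  simp [pre]

lemma pre_add (α : ℕ → Γ) (m n : ℕ) :
    pre α (m + n) = pre α m ++ List.ofFn fun i : Fin n => α (m + i) := by
  simp [pre, List.ofFn_add]

lemma pre_prefix_pre (α : ℕ → Γ) {m n : ℕ} (h : m ≤ n) : pre α m <+: pre α n := by
  obtain ⟨k, rfl⟩ := Nat.exists_eq_add_of_le h
  exact ⟨_, (pre_add α m k).symm⟩

lemma prefix_pre_iff {α : ℕ → Γ} {σ : List Γ} {n : ℕ} (h : σ.length ≤ n) :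
    σ <+: pre α n ↔ pre α σ.length = σ := by
  refine ⟨fun hσ => ?_, fun hσ => hσ ▸ pre_prefix_pre α h⟩
  exact (List.prefix_of_prefix_length_le (pre_prefix_pre α h) hσ (by simp)).eq_of_length
    (by simp)

lemma mem_cyl_singleton {α : ℕ → Γ} {σ : List Γ} : α ∈ cyl {σ} ↔ pre α σ.length = σ := by
  refine ⟨fun ⟨n, hn⟩ => ?_, fun h => ⟨σ.length, h⟩⟩
  rw [Set.mem_singleton_iff] at hn
  subst hn
  simp

lemma cyl_iUnion {ι : Sort*} (S : ι → Set (List Γ)) : cyl (⋃ i, S i) = ⋃ i, cyl (S i) := by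
  ext α
  simp only [mem_cyl, Set.mem_iUnion]
  exact exists_comm

lemma cyl_eq_biUnion (S : Set (List Γ)) : cyl S = ⋃ σ ∈ S, cyl {σ} := by
  ext α
  simp only [mem_cyl, Set.mem_iUnion, Set.mem_singleton_iff]
  exact ⟨fun ⟨n, hn⟩ => ⟨_, hn, n, rfl⟩, fun ⟨_, hσ, n, hn⟩ => ⟨n, hn ▸ hσ⟩⟩

def prefixMinimals (S : Set (List Γ)) : Set (List Γ) :=
  {σ ∈ S | ∀ τ ∈ S, τ <+: σ → τ = σ}

lemma prefixMinimals_subset (S : Set (List Γ)) : prefixMinimals S ⊆ S := fun _ h => h.1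

lemma prefixFree_prefixMinimals (S : Set (List Γ)) : prefixFree (prefixMinimals S) :=
  fun σ hσ _ hτ hp => hτ.2 σ hσ.1 hp

lemma cyl_prefixMinimals (S : Set (List Γ)) : cyl (prefixMinimals S) = cyl S := by
  refine Set.Subset.antisymm (fun α ⟨n, hn⟩ => ⟨n, hn.1⟩) fun α hα => ?_
  classical
  refine ⟨Nat.find hα, Nat.find_spec hα, fun τ hτ hp => ?_⟩
  have hlen : τ.length ≤ Nat.find hα := by simpa using hp.length_le
  have hτ_eq : pre α τ.length = τ := (prefix_pre_iff hlen).1 hp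
  have hmin : Nat.find hα ≤ τ.length := Nat.find_min' hα (hτ_eq.symm ▸ hτ)
  rw [← hτ_eq, le_antisymm hlen hmin]

def extensions (τ : List Γ) (m : ℕ) : Set (List Γ) :=
  Set.range fun ρ : Fin m → Γ => τ ++ List.ofFn ρ

/-- Every string of `E` shorter than `k` is replaced by all its extensions of length `k`;
longer strings are kept, as then `k - τ.length = 0`. -/
def extendTo (k : ℕ) (E : Set (List Γ)) : Set (List Γ) :=
  ⋃ τ ∈ E, extensions τ (k - τ.length)

lemma cyl_subset_cyl_extendTo (k : ℕ) (E : Set (List Γ)) : cyl E ⊆ cyl (extendTo k E) := by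
  rintro α ⟨n, hn⟩
  refine ⟨n + (k - n), Set.mem_biUnion hn ?_⟩
  rw [length_pre]
  exact ⟨fun i => α (n + i), (pre_add α n (k - n)).symm⟩

lemma le_length_of_mem_extendTo {k : ℕ} {E : Set (List Γ)} {υ : List Γ}
    (h : υ ∈ extendTo k E) : k ≤ υ.length := by
  obtain ⟨τ, -, ρ, rfl⟩ := Set.mem_iUnion₂.1 h
  simp only [List.length_append, List.length_ofFn]
  omega

end Strings

section OuterMeasure

variable {Ω : Type*} {r : List Ω → ℝ} {C : Set (ℕ → Ω)}

lemma muR_le_tsum {S : Set (List Ω)} (h : C ⊆ cyl S) :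
    muR r C ≤ ∑' σ : S, ENNReal.ofReal (r σ) :=
  calc muR r C ≤ ∑' σ : prefixMinimals S, ENNReal.ofReal (r σ) :=
        iInf₂_le_of_le _ (prefixFree_prefixMinimals S)
          (iInf_le _ (by rwa [cyl_prefixMinimals]))
    _ ≤ ∑' σ : S, ENNReal.ofReal (r σ) :=
        ENNReal.tsum_mono_subtype (fun σ => ENNReal.ofReal (r σ)) (prefixMinimals_subset S)

lemma exists_cover_of_muR_lt {x : ℝ≥0∞} (h : muR r C < x) :
    ∃ E : Set (List Ω), C ⊆ cyl E ∧ ∑' σ : E, ENNReal.ofReal (r σ) < x := by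
  simp only [muR, iInf_lt_iff] at h
  obtain ⟨E, -, hC, hE⟩ := h
  exact ⟨E, hC, hE⟩

lemma muR_empty : muR r ∅ = 0 :=
  nonpos_iff_eq_zero.1 <| (muR_le_tsum (S := ∅) (Set.empty_subset _)).trans_eq (by simp)

lemma muR_mono {D : Set (ℕ → Ω)} (h : C ⊆ D) : muR r C ≤ muR r D :=
  le_iInf₂ fun E hE => le_iInf fun hD => iInf₂_le_of_le E hE (iInf_le _ (h.trans hD))

lemma muR_iUnion_le (s : ℕ → Set (ℕ → Ω)) : muR r (⋃ n, s n) ≤ ∑' n, muR r (s n) := by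
  refine ENNReal.le_of_forall_pos_le_add fun ε hε hfin => ?_
  obtain ⟨δ, hδ, hδε⟩ := ENNReal.exists_pos_sum_of_countable' (ENNReal.coe_pos.2 hε).ne' ℕ
  have hcover (n : ℕ) : ∃ E : Set (List Ω), s n ⊆ cyl E ∧
      ∑' σ : E, ENNReal.ofReal (r σ) < muR r (s n) + δ n :=
    exists_cover_of_muR_lt <| ENNReal.lt_add_right
      (ne_top_of_le_ne_top hfin.ne (ENNReal.le_tsum n)) (hδ n).ne'
  choose E hsE hE using hcover
  calc muR r (⋃ n, s n) ≤ ∑' σ : ⋃ n, E n, ENNReal.ofReal (r σ) :=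
        muR_le_tsum (by rw [cyl_iUnion]; exact Set.iUnion_mono hsE)
    _ ≤ ∑' n, ∑' σ : E n, ENNReal.ofReal (r σ) :=
        ENNReal.tsum_iUnion_le_tsum (fun σ => ENNReal.ofReal (r σ)) E
    _ ≤ ∑' n, (muR r (s n) + δ n) := ENNReal.tsum_le_tsum fun n => (hE n).le
    _ = ∑' n, muR r (s n) + ∑' n, δ n := ENNReal.tsum_add
    _ ≤ ∑' n, muR r (s n) + ε := by gcongr

variable (r) in
noncomputable def muROuterMeasure : OuterMeasure (ℕ → Ω) where
  measureOf := muR r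
  empty := muR_empty
  mono := muR_mono
  iUnion_nat s _ := muR_iUnion_le s

end OuterMeasure

section Caratheodory

variable {Ω : Type*} {r : List Ω → ℝ}

lemma tsum_ofReal_append_ofFn (hr : MeasRep r) (m : ℕ) (τ : List Ω) :
    ∑' ρ : Fin m → Ω, ENNReal.ofReal (r (τ ++ List.ofFn ρ)) = ENNReal.ofReal (r τ) := by
  induction m generalizing τ with
  | zero => simp
  | succ m ih =>
    rw [← (Fin.consEquiv fun _ => Ω).tsum_eq, ENNReal.tsum_prod']
    have happend (a : Ω) (ρ : Fin m → Ω) : τ ++ a :: List.ofFn ρ = τ ++ [a] ++ List.ofFn ρ := by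
      simp
    simp only [Fin.consEquiv_apply, List.ofFn_succ, Fin.cons_zero, Fin.cons_succ, happend, ih]
    rw [← ENNReal.ofReal_tsum_of_nonneg (fun a => (hr.1 _).1) (hr.2 τ).summable,
      (hr.2 τ).tsum_eq]

lemma tsum_extendTo_le (hr : MeasRep r) (k : ℕ) (E : Set (List Ω)) :
    ∑' υ : extendTo k E, ENNReal.ofReal (r υ) ≤ ∑' τ : E, ENNReal.ofReal (r τ) :=
  calc ∑' υ : extendTo k E, ENNReal.ofReal (r υ)
      ≤ ∑' τ : E, ∑' υ : extensions τ.1 (k - τ.1.length), ENNReal.ofReal (r υ) :=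
        ENNReal.tsum_biUnion_le_tsum (fun υ => ENNReal.ofReal (r υ)) E _
    _ = ∑' τ : E, ENNReal.ofReal (r τ) := by
        refine tsum_congr fun τ => ?_
        rw [extensions, tsum_range (fun υ => ENNReal.ofReal (r υ))
          fun ρ₁ ρ₂ h => List.ofFn_injective (List.append_cancel_left h),
          tsum_ofReal_append_ofFn hr]

lemma muR_inter_add_diff_le (hr : MeasRep r) (σ : List Ω) (C : Set (ℕ → Ω)) :
    muR r (C ∩ cyl {σ}) + muR r (C \ cyl {σ}) ≤ muR r C := by
  refine le_iInf₂ fun E _ => le_iInf fun hCE => ?_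
  set F := extendTo σ.length E
  set P : Set (List Ω) := {υ | σ <+: υ}
  have hCF : C ⊆ cyl F := hCE.trans (cyl_subset_cyl_extendTo _ E)
  have hmem {α : ℕ → Ω} {n : ℕ} (hn : pre α n ∈ F) : α ∈ cyl {σ} ↔ pre α n ∈ P := by
    rw [mem_cyl_singleton, Set.mem_ofPred_eq, prefix_pre_iff]
    simpa using le_length_of_mem_extendTo hn
  have hin : C ∩ cyl {σ} ⊆ cyl (F ∩ P) := fun α ⟨hα, hασ⟩ =>
    let ⟨n, hn⟩ := hCF hα; ⟨n, hn, (hmem hn).1 hασ⟩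
  have hout : C \ cyl {σ} ⊆ cyl (F \ P) := fun α ⟨hα, hασ⟩ =>
    let ⟨n, hn⟩ := hCF hα; ⟨n, hn, fun h => hασ ((hmem hn).2 h)⟩
  calc muR r (C ∩ cyl {σ}) + muR r (C \ cyl {σ})
      ≤ ∑' υ : ↑(F ∩ P), ENNReal.ofReal (r υ) + ∑' υ : ↑(F \ P), ENNReal.ofReal (r υ) :=
        add_le_add (muR_le_tsum hin) (muR_le_tsum hout)
    _ = ∑' υ : F, ENNReal.ofReal (r υ) := by
        rw [← ENNReal.summable.tsum_union_disjoint (f := fun υ => ENNReal.ofReal (r υ))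
          Set.disjoint_sdiff_inter.symm ENNReal.summable, Set.inter_union_sdiff]
    _ ≤ ∑' τ : E, ENNReal.ofReal (r τ) := tsum_extendTo_le hr _ E

lemma borelSeq_le_caratheodory [Countable Ω] (hr : MeasRep r) :
    borelSeq Ω ≤ (muROuterMeasure r).caratheodory := by
  refine MeasurableSpace.generateFrom_le ?_
  rintro _ ⟨S, rfl⟩
  rw [cyl_eq_biUnion]
  exact MeasurableSet.biUnion S.to_countable fun σ _ =>
    (OuterMeasure.isCaratheodory_iff_le _).2 fun C => muR_inter_add_diff_le hr σ C

end Caratheodory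

theorem stmt5_general {Ω : Type*} [Countable Ω] (r : List Ω → ℝ)
    (hr : MeasRep r) :
    (∀ G : Set (ℕ → Ω), @MeasurableSet _ (borelSeq Ω) G →
      ∀ C : Set (ℕ → Ω), muR r (C ∩ G) + muR r (C \ G) = muR r C) ∧
    (∀ σ : List Ω, ∀ C : Set (ℕ → Ω),
      muR r (C ∩ cyl {σ}) + muR r (C \ cyl {σ}) = muR r C) := by
  have borel_caratheodory (G : Set (ℕ → Ω)) (hG : MeasurableSet[borelSeq Ω] G)
      (C : Set (ℕ → Ω)) : muR r (C ∩ G) + muR r (C \ G) = muR r C :=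
    (borelSeq_le_caratheodory hr G hG C).symm
  exact ⟨borel_caratheodory, fun σ =>
    borel_caratheodory _ (MeasurableSpace.measurableSet_generateFrom ⟨{σ}, rfl⟩)⟩

/-- Every Borel subset of `Ω^∞` is Carathéodory `μ_r`-measurable;
in particular so is every basic open cylinder `[σ]≺`. -/
theorem stmt5 {Ω : Type*} [Countable Ω] [Infinite Ω] (r : List Ω → ℝ)
    (hr : MeasRep r) :
    (∀ G : Set (ℕ → Ω), @MeasurableSet _ (borelSeq Ω) G →
      ∀ C : Set (ℕ → Ω), muR r (C ∩ G) + muR r (C \ G) = muR r C) ∧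
    (∀ σ : List Ω, ∀ C : Set (ℕ → Ω),
      muR r (C ∩ cyl {σ}) + muR r (C \ cyl {σ}) = muR r C) :=
  stmt5_general r hr
end

section
/- Let Ω be an r.e. infinite set, P a discrete probability space on Ω, and B ⊆ Ω a recursive event with P(B) > 0. If α is Martin-Löf P-random, then the sequence Filtered_B(α), obtained from α by deleting all elements not in B, is Martin-Löf P_B-random, where P_B(a) := P({a})/P(B) for a ∈ B. (Closure of ensembles under conditioning.) -/
open scoped ENNReal

/-- The (generalized) Bernoulli probability of a finite string:
`P(σ₁)···P(σₙ)`. -/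
def strP {Γ : Type*} (P : Γ → ℝ) (σ : List Γ) : ℝ := (σ.map P).prod

/-- The `λ_P`-measure of the open set generated by a prefix-free set `S`. -/
noncomputable def mOpen {Γ : Type*} (P : Γ → ℝ) (S : Set (List Γ)) : ℝ≥0∞ :=
  ∑' σ : S, ENNReal.ofReal (strP P (σ : List Γ))

/-- All symbols of the string belong to the alphabet `O`. -/
def strIn {Γ : Type*} (O : Set Γ) (σ : List Γ) : Prop := ∀ a ∈ σ, a ∈ O

/-- All symbols of the sequence belong to the alphabet `O`. -/
def seqIn {Γ : Type*} (O : Set Γ) (α : ℕ → Γ) : Prop := ∀ n, α n ∈ O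

/-- `P` is a discrete probability space on the alphabet `O`. -/
def isProb {Γ : Type*} (O : Set Γ) (P : Γ → ℝ) : Prop :=
  (∀ a ∈ O, 0 ≤ P a) ∧ HasSum (fun a : O => P (a : Γ)) 1

/-- The combinatorial conditions on a Martin-Löf `P`-test: sections consist of strings
over the alphabet, are prefix-free, and have `λ_P`-measure `< 2⁻ⁿ`. -/
def isTestSet {Γ : Type*} (O : Set Γ) (P : Γ → ℝ) (C : Set (ℕ × List Γ)) : Prop :=
  (∀ x ∈ C, strIn O x.2) ∧
  ∀ n : ℕ, 1 ≤ n → prefixFree {σ | (n, σ) ∈ C} ∧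
    mOpen P {σ | (n, σ) ∈ C} < (2 : ℝ≥0∞)⁻¹ ^ n

/-- A Martin-Löf `P`-test: an r.e. subset of `ℕ⁺ × Ω*` satisfying the test conditions. -/
def MLTest {Γ : Type*} [Primcodable Γ] (O : Set Γ) (P : Γ → ℝ)
    (C : Set (ℕ × List Γ)) : Prop :=
  REPred (· ∈ C) ∧ isTestSet O P C

/-- `α` is Martin-Löf `P`-random: it passes every Martin-Löf `P`-test. -/
def MLRandom {Γ : Type*} [Primcodable Γ] (O : Set Γ) (P : Γ → ℝ) (α : ℕ → Γ) : Prop :=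
  ∀ C : Set (ℕ × List Γ), MLTest O P C → ∃ n, 1 ≤ n ∧ α ∉ cyl {σ | (n, σ) ∈ C}

/-! Pull a Martin-Löf `P_B`-test `C` back along the filtering map: the `n`-th section of the new
test consists of the strings `τ` over `Ω` that are empty or end in `B` and whose `B`-filtered
string lies in `C_n`. It is r.e. and prefix-free, and it is a `P`-test because the strings
filtering to `σ ∈ B*` carry total weight at most `P(σ) · S^|σ|`, where
`S = ∑_{ρ ∈ (Ω \ B)*} P(ρ) ≤ 1 / (1 - P(Ω \ B)) ≤ 1 / P(B)`; hence `λ_P(C'_n) ≤ λ_{P_B}(C_n)`.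
If `Filtered_B(α)` has a prefix in `C_n`, then `α` has a prefix in `C'_n`. -/

open Set

section Computability

variable {α β : Type*} [Primcodable α] [Primcodable β]

theorem REPred.comp {p : β → Prop} (hp : REPred p) {f : α → β} (hf : Computable f) :
    REPred fun a => p (f a) :=
  Partrec.comp hp hf

theorem REPred.and {p q : α → Prop} (hp : REPred p) (hq : REPred q) :
    REPred fun a => p a ∧ q a :=
  (Partrec.bind hp (hq.comp Computable.fst).to₂).dom_re.of_eq fun a => by
    simp [Part.bind_dom, Part.assert]

theorem REPred.exists_of_computablePred {p : α → ℕ → Prop}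
    (hp : ComputablePred fun x : α × ℕ => p x.1 x.2) : REPred fun a => ∃ n, p a n := by
  obtain ⟨f, hf, hpf⟩ := ComputablePred.computable_iff.1 hp
  have hsearch : Partrec fun a => Nat.rfind fun n => Part.some (f (a, n)) :=
    Partrec.rfind hf.partrec.to₂
  refine hsearch.dom_re.of_eq fun a => Nat.rfind_dom.trans ?_
  simp [fun n => congrFun hpf (a, n)]

open Nat.Partrec.Code in
theorem REPred.forall_mem_list {p : α → Prop} (hp : REPred p) :
    REPred fun l : List α => ∀ a ∈ l, p a := by
  obtain ⟨c, hc⟩ := exists_code.1 hp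
  -- `stage a k`: the enumeration of `p` has accepted `a` within `k` steps
  set stage : α → ℕ → Bool := fun a k => (evaln k c (Encodable.encode a)).isSome
  have hstage : PrimrecRel fun a k => stage a k = true := by
    refine Primrec₂.primrecRel ?_
    simpa using (Primrec.option_isSome.comp (primrec_evaln.comp
      ((Primrec.pair (Primrec.pair Primrec.snd (Primrec.const c))
        (Primrec.encode.comp Primrec.fst))))).to₂
  have hp_iff : ∀ a, p a ↔ ∃ k, stage a k = true := fun a => by
    have : p a ↔ (eval c (Encodable.encode a)).Dom := by
      simp [hc, Encodable.encodek, Part.assert]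
    simp only [this, stage, Option.isSome_iff_exists, Part.dom_iff_mem, evaln_complete]
    exact exists_comm
  have hmono : ∀ a k k', k ≤ k' → stage a k = true → stage a k' = true := fun a k k' hk => by
    simp only [stage, Option.isSome_iff_exists]
    exact fun ⟨x, hx⟩ => ⟨x, evaln_mono hk hx⟩
  refine (REPred.exists_of_computablePred (p := fun l k => ∀ a ∈ l, stage a k = true)
    hstage.forall_mem_list.computablePred).of_eq fun l => ⟨?_, fun hl => ?_⟩
  · exact fun ⟨k, hk⟩ a ha => (hp_iff a).2 ⟨k, hk a ha⟩
  · have : ∀ a ∈ l, ∀ᶠ k in Filter.atTop, stage a k = true := fun a ha => by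
      obtain ⟨k, hk⟩ := (hp_iff a).1 (hl a ha)
      exact Filter.eventually_atTop.2 ⟨k, fun k' hk' => hmono a k k' hk' hk⟩
    exact ((Filter.eventually_all_finite l.finite_toSet).2 this).exists

theorem Computable.list_filter {f : α → Bool} (hf : Computable f) :
    Computable (List.filter f) := by
  let step : List α → ℕ × List α → List α := fun l x =>
    Option.casesOn l[x.1]? x.2 fun a => bif f a then x.2 ++ [a] else x.2
  have hstep : Computable₂ step :=
    Computable.option_casesOn
      (Primrec.list_getElem?.to_comp.comp Computable.fst (Computable.fst.comp Computable.snd))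
      (Computable.snd.comp Computable.snd)
      (Computable.cond (hf.comp Computable.snd)
        (Computable.list_concat.comp (Computable.snd.comp (Computable.snd.comp Computable.fst))
          Computable.snd)
        (Computable.snd.comp (Computable.snd.comp Computable.fst))).to₂
  have hrec : ∀ l n, (Nat.rec [] (fun n acc => step l (n, acc)) n : List α)
      = (l.take n).filter f := fun l n => by
    induction n with
    | zero => simp
    | succ n ih =>
      simp only [ih, step, List.take_add_one, List.filter_append]
      cases l[n]? with
      | none => simp
      | some a => cases h : f a <;> simp [h]
  exact (Computable.nat_rec Computable.list_length (Computable.const []) hstep).of_eq fun l => by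
    simp only [hrec, List.take_length]

theorem computablePred_forall_mem_getLast? {B : Set α} (hB : ComputablePred (· ∈ B)) :
    ComputablePred fun l : List α => ∀ b ∈ l.getLast?, b ∈ B := by
  classical
  refine ComputablePred.computable_iff.2 ⟨fun l => l.reverse.head?.all (· ∈ B), ?_, ?_⟩
  · exact (Computable.option_casesOn (Primrec.list_head?.comp Primrec.list_reverse).to_comp
      (Computable.const true) (hB.decide.comp Computable.snd).to₂).of_eq fun l => by
        cases l.reverse.head? <;> rfl
  · funext l
    simp only [← List.getLast?_eq_head?_reverse, eq_iff_iff]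
    cases l.getLast? <;> simp

end Computability

theorem ENNReal.tsum_image2_le {α β γ : Type*} (f : α → β → γ) (s : Set α) (t : Set β)
    (w : γ → ℝ≥0∞) : ∑' z : image2 f s t, w z ≤ ∑' (x : s) (y : t), w (f x y) := by
  have hsurj : Function.Surjective fun p : s × t =>
      (⟨f p.1 p.2, mem_image2_of_mem p.1.2 p.2.2⟩ : image2 f s t) := by
    rintro ⟨_, x, hx, y, hy, rfl⟩
    exact ⟨(⟨x, hx⟩, ⟨y, hy⟩), rfl⟩
  exact (ENNReal.tsum_le_tsum_comp_of_surjective hsurj _).trans_eq ENNReal.tsum_prod'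

section Weight

variable {Γ : Type*} (P : Γ → ℝ)

noncomputable def strWeight (σ : List Γ) : ℝ≥0∞ := (σ.map fun a => ENNReal.ofReal (P a)).prod

@[simp]
theorem strWeight_nil : strWeight P [] = 1 := rfl

@[simp]
theorem strWeight_cons (a : Γ) (σ : List Γ) :
    strWeight P (a :: σ) = ENNReal.ofReal (P a) * strWeight P σ := by
  simp [strWeight]

@[simp]
theorem strWeight_append (ρ σ : List Γ) :
    strWeight P (ρ ++ σ) = strWeight P ρ * strWeight P σ := by
  simp [strWeight]

variable {P}

theorem ofReal_strP {O : Set Γ} (hP : ∀ a ∈ O, 0 ≤ P a) {σ : List Γ} (hσ : strIn O σ) :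
    ENNReal.ofReal (strP P σ) = strWeight P σ := by
  induction σ with
  | nil => simp [strP]
  | cons a σ ih =>
    have ha : 0 ≤ P a := hP a (hσ a List.mem_cons_self)
    rw [strWeight_cons, ← ih fun b hb => hσ b (List.mem_cons_of_mem a hb),
      ← ENNReal.ofReal_mul ha]
    simp [strP]

theorem strWeight_div {c : ℝ} (hc : 0 < c) (σ : List Γ) :
    strWeight (fun a => P a / c) σ = strWeight P σ * (ENNReal.ofReal c)⁻¹ ^ σ.length := by
  induction σ with
  | nil => simp
  | cons a σ ih =>
    rw [strWeight_cons, ih, ENNReal.ofReal_div_of_pos hc, strWeight_cons, List.length_cons,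
      pow_succ, div_eq_mul_inv]
    ring

theorem tsum_strWeight_length_le (D : Set Γ) (n : ℕ) :
    ∑' ρ : {ρ | strIn D ρ ∧ ρ.length = n}, strWeight P ρ
      ≤ (∑' a : D, ENNReal.ofReal (P a)) ^ n := by
  induction n with
  | zero =>
    have : {ρ : List Γ | strIn D ρ ∧ ρ.length = 0} ⊆ {[]} := fun ρ hρ =>
      List.length_eq_zero_iff.1 hρ.2
    exact (ENNReal.tsum_mono_subtype _ this).trans_eq (by simp)
  | succ n ih =>
    have hsub : {ρ : List Γ | strIn D ρ ∧ ρ.length = n + 1}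
        ⊆ image2 List.cons D {ρ | strIn D ρ ∧ ρ.length = n} := by
      rintro (_ | ⟨a, ρ⟩) ⟨hD, hlen⟩
      · simp at hlen
      · exact mem_image2_of_mem (hD a List.mem_cons_self)
          ⟨fun b hb => hD b (List.mem_cons_of_mem a hb), by simpa using hlen⟩
    calc _ ≤ _ := ENNReal.tsum_mono_subtype _ hsub
      _ ≤ _ := ENNReal.tsum_image2_le _ _ _ _
      _ = (∑' a : D, ENNReal.ofReal (P a)) *
            ∑' ρ : {ρ | strIn D ρ ∧ ρ.length = n}, strWeight P ρ := by
        simp only [strWeight_cons, ENNReal.tsum_mul_left, ENNReal.tsum_mul_right]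
      _ ≤ _ := by
        rw [pow_succ']
        gcongr

theorem tsum_strWeight_strIn_le (D : Set Γ) :
    ∑' ρ : {ρ | strIn D ρ}, strWeight P ρ ≤ (1 - ∑' a : D, ENNReal.ofReal (P a))⁻¹ := by
  have hcover : {ρ : List Γ | strIn D ρ} = ⋃ n, {ρ | strIn D ρ ∧ ρ.length = n} := by
    ext ρ; simp
  calc _ = _ := by rw [hcover]
    _ ≤ _ := ENNReal.tsum_iUnion_le_tsum _ _
    _ ≤ _ := ENNReal.tsum_le_tsum fun n => tsum_strWeight_length_le D n
    _ = _ := ENNReal.tsum_geometric _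

theorem tsum_strWeight_strIn_sdiff_le {Ω B : Set Γ} (hP : isProb Ω P) (hBΩ : B ⊆ Ω) {pB : ℝ}
    (hpB : HasSum (fun b : B => P b) pB) :
    ∑' ρ : {ρ | strIn (Ω \ B) ρ}, strWeight P ρ ≤ (ENNReal.ofReal pB)⁻¹ := by
  have hsum : ∀ {O : Set Γ}, O ⊆ Ω → ∀ {x : ℝ}, HasSum (fun a : O => P a) x →
      ∑' a : O, ENNReal.ofReal (P a) = ENNReal.ofReal x := fun hO x hx => by
    rw [← ENNReal.ofReal_tsum_of_nonneg (fun a => hP.1 _ (hO a.2)) hx.summable, hx.tsum_eq]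
  have hpq : ENNReal.ofReal pB + ∑' a : ↥(Ω \ B), ENNReal.ofReal (P a) ≤ 1 := by
    rw [← hsum hBΩ hpB, ← ENNReal.summable.tsum_union_disjoint
      (f := fun a => ENNReal.ofReal (P a)) disjoint_sdiff_right ENNReal.summable,
      union_sdiff_cancel hBΩ, hsum subset_rfl hP.2, ENNReal.ofReal_one]
  have hq : ∑' a : ↥(Ω \ B), ENNReal.ofReal (P a) ≠ ⊤ :=
    ne_top_of_le_ne_top ENNReal.one_ne_top (le_add_self.trans hpq)
  exact (tsum_strWeight_strIn_le _).trans
    (ENNReal.inv_le_inv.2 (ENNReal.le_sub_of_add_le_right hq hpq))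

end Weight

section Filtering

variable {Γ : Type*} (Ω B : Set Γ) [DecidablePred (· ∈ B)]

def filterFiber (σ : List Γ) : Set (List Γ) :=
  {τ | strIn Ω τ ∧ τ.filter (· ∈ B) = σ ∧ ∀ b ∈ τ.getLast?, b ∈ B}

theorem filterFiber_nil : filterFiber Ω B [] = {[]} := by
  refine subset_antisymm (fun τ ⟨_, hfilt, hlast⟩ => ?_) (by simp [filterFiber, strIn])
  rcases List.eq_nil_or_concat τ with rfl | ⟨τ, b, rfl⟩
  · rfl
  · exact absurd (hlast b (by simp)) (by simpa using List.filter_eq_nil_iff.1 hfilt b (by simp))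

theorem filterFiber_cons_subset (a : Γ) (σ : List Γ) :
    filterFiber Ω B (a :: σ)
      ⊆ image2 (fun ρ τ => ρ ++ a :: τ) {ρ | strIn (Ω \ B) ρ} (filterFiber Ω B σ) := by
  rintro _ ⟨hΩ, hfilt, hlast⟩
  obtain ⟨ρ, τ, rfl, hρ, -, hτ⟩ := List.filter_eq_cons_iff.1 hfilt
  refine mem_image2_of_mem (fun x hx => ⟨hΩ x (by simp [hx]), by simpa using hρ x hx⟩)
    ⟨fun x hx => hΩ x (by simp [hx]), hτ, fun b hb => hlast b ?_⟩
  simp_all [List.getLast?_cons]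

theorem tsum_strWeight_filterFiber_le (P : Γ → ℝ) (σ : List Γ) :
    ∑' τ : filterFiber Ω B σ, strWeight P τ
      ≤ strWeight P σ * (∑' ρ : {ρ | strIn (Ω \ B) ρ}, strWeight P ρ) ^ σ.length := by
  set S := ∑' ρ : {ρ | strIn (Ω \ B) ρ}, strWeight P ρ
  induction σ with
  | nil => rw [filterFiber_nil, tsum_singleton (f := strWeight P)]; simp
  | cons a σ ih =>
    calc _ ≤ _ := ENNReal.tsum_mono_subtype _ (filterFiber_cons_subset Ω B a σ)
      _ ≤ _ := ENNReal.tsum_image2_le _ _ _ _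
      _ = S * (ENNReal.ofReal (P a) * ∑' τ : filterFiber Ω B σ, strWeight P τ) := by
        simp only [strWeight_append, strWeight_cons, ENNReal.tsum_mul_left,
          ENNReal.tsum_mul_right, S]
      _ ≤ S * (ENNReal.ofReal (P a) * (strWeight P σ * S ^ σ.length)) := by gcongr
      _ = _ := by rw [strWeight_cons, List.length_cons, pow_succ]; ring

-- Requiring the strings to end in `B` (or be empty) keeps the sections prefix-free.
def filterPullback (C : Set (ℕ × List Γ)) : Set (ℕ × List Γ) :=
  {x | strIn Ω x.2 ∧ (x.1, x.2.filter (· ∈ B)) ∈ C ∧ ∀ b ∈ x.2.getLast?, b ∈ B}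

variable {Ω B} {C : Set (ℕ × List Γ)}

theorem prefixFree_filterPullback {n : ℕ} (hC : prefixFree {σ | (n, σ) ∈ C}) :
    prefixFree {τ | (n, τ) ∈ filterPullback Ω B C} := by
  rintro σ ⟨-, hσC, -⟩ _ ⟨-, hτC, hlast⟩ ⟨e, rfl⟩
  have he : e.filter (· ∈ B) = [] := by
    simpa [List.filter_append] using hC _ hσC _ hτC ((List.prefix_append σ e).filter _)
  rcases List.eq_nil_or_concat e with rfl | ⟨e, b, rfl⟩
  · simp
  · exact absurd (hlast b (by simp)) (by simpa using List.filter_eq_nil_iff.1 he b (by simp))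

theorem filterPullback_re [Primcodable Γ] (hΩ : REPred (· ∈ Ω)) (hB : ComputablePred (· ∈ B))
    (hC : REPred (· ∈ C)) : REPred (· ∈ filterPullback Ω B C) :=
  (hΩ.forall_mem_list.comp Computable.snd).and <|
    (hC.comp (Computable.fst.pair ((Computable.list_filter hB.decide).comp Computable.snd))).and
      ((computablePred_forall_mem_getLast? hB).to_re.comp Computable.snd)

theorem mOpen_filterPullback_le {P : Γ → ℝ} (hP : ∀ a ∈ Ω, 0 ≤ P a) (hBΩ : B ⊆ Ω) {c : ℝ}
    (hc : 0 < c) (hS : ∑' ρ : {ρ | strIn (Ω \ B) ρ}, strWeight P ρ ≤ (ENNReal.ofReal c)⁻¹)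
    (hC : ∀ x ∈ C, strIn B x.2) (n : ℕ) :
    mOpen P {τ | (n, τ) ∈ filterPullback Ω B C} ≤ mOpen (fun a => P a / c) {σ | (n, σ) ∈ C} := by
  have hPc : ∀ a ∈ B, 0 ≤ P a / c := fun a ha => div_nonneg (hP a (hBΩ ha)) hc.le
  calc mOpen P {τ | (n, τ) ∈ filterPullback Ω B C}
      = ∑' τ : {τ | (n, τ) ∈ filterPullback Ω B C}, strWeight P τ :=
        tsum_congr fun τ => ofReal_strP hP τ.2.1
    _ ≤ ∑' τ : ⋃ σ : {σ | (n, σ) ∈ C}, filterFiber Ω B σ, strWeight P τ :=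
        ENNReal.tsum_mono_subtype _ fun τ hτ => mem_iUnion.2 ⟨⟨_, hτ.2.1⟩, hτ.1, rfl, hτ.2.2⟩
    _ ≤ ∑' (σ : {σ | (n, σ) ∈ C}) (τ : filterFiber Ω B σ), strWeight P τ :=
        ENNReal.tsum_iUnion_le_tsum _ _
    _ ≤ ∑' σ : {σ | (n, σ) ∈ C}, strWeight P σ * (ENNReal.ofReal c)⁻¹ ^ (σ : List Γ).length :=
        ENNReal.tsum_le_tsum fun σ => (tsum_strWeight_filterFiber_le Ω B P σ).trans (by gcongr)
    _ = mOpen (fun a => P a / c) {σ | (n, σ) ∈ C} :=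
        tsum_congr fun σ => by rw [ofReal_strP hPc (hC _ σ.2), strWeight_div hc]

theorem isTestSet_filterPullback {P : Γ → ℝ} (hP : ∀ a ∈ Ω, 0 ≤ P a) (hBΩ : B ⊆ Ω) {c : ℝ}
    (hc : 0 < c) (hS : ∑' ρ : {ρ | strIn (Ω \ B) ρ}, strWeight P ρ ≤ (ENNReal.ofReal c)⁻¹)
    (hC : isTestSet B (fun a => P a / c) C) : isTestSet Ω P (filterPullback Ω B C) :=
  ⟨fun _ hx => hx.1, fun n hn => ⟨prefixFree_filterPullback (hC.2 n hn).1,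
    (mOpen_filterPullback_le hP hBΩ hc hS hC.1 n).trans_lt (hC.2 n hn).2⟩⟩

end Filtering

section Prefixes

variable {Γ : Type*}

theorem pre_succ (α : ℕ → Γ) (N : ℕ) : pre α (N + 1) = pre α N ++ [α N] := by
  rw [pre, List.ofFn_succ']
  simp [pre]

theorem strIn_pre {O : Set Γ} {α : ℕ → Γ} (hα : seqIn O α) (N : ℕ) : strIn O (pre α N) := by
  simpa [strIn, pre, List.mem_ofFn] using fun _ => hα _

variable {B : Set Γ} [DecidablePred (· ∈ B)] {α : ℕ → Γ} {s : ℕ → ℕ}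

theorem filter_pre_eq_pre_comp (hs : StrictMono s) (hsB : ∀ k, α (s k) ∈ B)
    (hall : ∀ m, α m ∈ B → ∃ k, s k = m) {N m : ℕ} (hNm : ∀ k, s k < N ↔ k < m) :
    (pre α N).filter (· ∈ B) = pre (fun k => α (s k)) m := by
  induction N generalizing m with
  | zero =>
    obtain rfl : m = 0 := by simpa using hNm 0
    simp [pre]
  | succ N ih =>
    rw [pre_succ, List.filter_append]
    by_cases hN : α N ∈ B
    · obtain ⟨k, rfl⟩ := hall _ hN
      obtain rfl : m = k + 1 := by
        have := hNm k; have := hNm (k + 1); have := hs (Nat.lt_add_one k); omega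
      rw [ih (m := k) fun j => hs.lt_iff_lt, pre_succ]
      simp [hN]
    · have hne : ∀ j, s j ≠ N := fun j h => hN (h ▸ hsB j)
      rw [ih (m := m) fun j => by have := hNm j; have := hne j; omega]
      simp [hN]

theorem mem_cyl_filterPullback {Ω : Set Γ} {C : Set (ℕ × List Γ)} (hα : seqIn Ω α)
    (hs : StrictMono s) (hsB : ∀ k, α (s k) ∈ B) (hall : ∀ m, α m ∈ B → ∃ k, s k = m) {n : ℕ}
    (h : (fun k => α (s k)) ∈ cyl {σ | (n, σ) ∈ C}) :
    α ∈ cyl {τ | (n, τ) ∈ filterPullback Ω B C} := by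
  obtain ⟨_ | k, hk⟩ := h
  · exact ⟨0, strIn_pre hα 0, by simpa [pre] using hk, by simp [pre]⟩
  · refine ⟨s k + 1, strIn_pre hα _, ?_, by simp [pre_succ, hsB k]⟩
    rwa [filter_pre_eq_pre_comp hs hsB hall fun j => by
      rw [Nat.lt_succ_iff, Nat.lt_succ_iff, hs.le_iff_le]]

end Prefixes

theorem stmt16_general (Ω : Set ℕ) (hre : REPred (· ∈ Ω))
    (P : ℕ → ℝ) (hP : isProb Ω P)
    (B : Set ℕ) (hBsub : B ⊆ Ω) (hBrec : ComputablePred (· ∈ B))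
    (pB : ℝ) (hpB : HasSum (fun b : B => P (b : ℕ)) pB) (hpBpos : 0 < pB)
    (α : ℕ → ℕ) (hα : seqIn Ω α) (hrand : MLRandom Ω P α)
    (s : ℕ → ℕ) (hs : StrictMono s)
    (hsB : ∀ k, α (s k) ∈ B)
    (hall : ∀ m, α m ∈ B → ∃ k, s k = m) :
    MLRandom B (fun a => P a / pB) (fun k => α (s k)) := by
  classical
  rintro C ⟨hCre, hCtest⟩
  have htest : MLTest Ω P (filterPullback Ω B C) :=
    ⟨filterPullback_re hre hBrec hCre, isTestSet_filterPullback hP.1 hBsub hpBpos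
      (tsum_strWeight_strIn_sdiff_le hP hBsub hpB) hCtest⟩
  obtain ⟨n, hn, hαn⟩ := hrand _ htest
  exact ⟨n, hn, fun hβ => hαn (mem_cyl_filterPullback hα hs hsB hall hβ)⟩

/-- Closure of ensembles under conditioning: for a recursive event
`B ⊆ Ω` with `P(B) > 0`, the sequence obtained from a Martin-Löf `P`-random `α` by
deleting all elements not in `B` (here `s` enumerates `{n | α n ∈ B}` in increasing
order) is Martin-Löf `P_B`-random, where `P_B a = P a / P(B)`. -/
theorem stmt16 (Ω : Set ℕ) (hre : REPred (· ∈ Ω)) (hinf : Ω.Infinite)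
    (P : ℕ → ℝ) (hP : isProb Ω P)
    (B : Set ℕ) (hBsub : B ⊆ Ω) (hBrec : ComputablePred (· ∈ B))
    (pB : ℝ) (hpB : HasSum (fun b : B => P (b : ℕ)) pB) (hpBpos : 0 < pB)
    (α : ℕ → ℕ) (hα : seqIn Ω α) (hrand : MLRandom Ω P α)
    (s : ℕ → ℕ) (hs : StrictMono s)
    (hsB : ∀ k, α (s k) ∈ B)
    (hall : ∀ m, α m ∈ B → ∃ k, s k = m) :
    MLRandom B (fun a => P a / pB) (fun k => α (s k)) :=
  stmt16_general Ω hre P hP B hBsub hBrec pB hpB hpBpos α hα hrand s hs hsB hall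
end

section
/- Let Ω and Ω' be r.e. infinite sets, P a discrete probability space on Ω, and X : Ω → Ω' a random variable which is a partial recursive function with domain exactly Ω. If α is Martin-Löf P-random, then X(α) (the pointwise image sequence, X(α)(k) := X(α(k))) is Martin-Löf X(P)-random, where X(P)(x) := P(X⁻¹({x})). -/
open scoped ENNReal

/-!
A Martin-Löf `X(P)`-test `C` pulls back along `X` to the `P`-test `X⁻¹(C)`, whose `n`-th level
consists of the strings `τ` over `Ω` whose letterwise image `X(τ)` lies in `Cₙ`. It is r.e.
because applying `X` letterwise is partial recursive; it is prefix-free because `X` is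
single-valued and preserves lengths; and its `λ_P`-measure is at most `λ_{X(P)}(Cₙ)`, since the
`λ_P`-mass of the strings mapped onto `σ` is `∏ P(X⁻¹{σᵢ}) = λ_{X(P)}(σ)`. As `α` escapes some
level of `X⁻¹(C)`, its image `β` escapes the same level of `C`.
-/

namespace PFun

variable {α β : Type*}

def listMap (f : α →. β) : List α →. List β
  | [] => Part.some []
  | a :: l => (listMap f l).bind fun σ => (f a).map (· :: σ)

theorem mem_listMap_iff (f : α →. β) {τ : List α} {σ : List β} :
    σ ∈ f.listMap τ ↔ List.Forall₂ (fun a b => b ∈ f a) τ σ := by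
  induction τ generalizing σ with
  | nil => simp [listMap]
  | cons a l ih =>
    simp only [listMap, Part.mem_bind_iff, Part.mem_map_iff, ih, List.forall₂_cons_left_iff]
    aesop

theorem mem_preimage_singleton (f : α →. β) (a : α) (b : β) : a ∈ f.preimage {b} ↔ b ∈ f a := by
  simp [mem_preimage]

theorem cons_mem_listMap {f : α →. β} {a : α} {b : β} {τ : List α} {σ : List β}
    (hb : b ∈ f a) (h : σ ∈ f.listMap τ) : b :: σ ∈ f.listMap (a :: τ) :=
  Part.mem_bind h (Part.mem_map _ hb)

theorem cons_mem_listMap_iff {f : α →. β} {τ : List α} {b : β} {σ : List β} :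
    b :: σ ∈ f.listMap τ ↔ ∃ a τ', b ∈ f a ∧ σ ∈ f.listMap τ' ∧ τ = a :: τ' := by
  simp only [mem_listMap_iff, List.forall₂_cons_right_iff]

theorem dom_of_mem_listMap {f : α →. β} {τ : List α} {σ : List β} (h : σ ∈ f.listMap τ)
    {a : α} (ha : a ∈ τ) : (f a).Dom := by
  have h₂ := f.mem_listMap_iff.1 h
  clear h
  induction h₂ with
  | nil => simp at ha
  | cons hb _ ih =>
    rcases List.mem_cons.1 ha with rfl | ha
    exacts [Part.dom_iff_mem.2 ⟨_, hb⟩, ih ha]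

theorem length_eq_of_mem_listMap {f : α →. β} {τ : List α} {σ : List β}
    (h : σ ∈ f.listMap τ) : σ.length = τ.length :=
  (f.mem_listMap_iff.1 h).length_eq.symm

theorem prefix_of_mem_listMap {f : α →. β} {τ τ' : List α} {σ σ' : List β} (hτ : τ <+: τ')
    (h : σ ∈ f.listMap τ) (h' : σ' ∈ f.listMap τ') : σ <+: σ' := by
  obtain ⟨r, rfl⟩ := hτ
  have htake : σ'.take τ.length ∈ f.listMap τ := by
    simpa using f.mem_listMap_iff.2 (List.forall₂_take τ.length (f.mem_listMap_iff.1 h'))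
  rw [Part.mem_unique h htake]
  exact List.take_prefix _ _

theorem ofFn_mem_listMap {f : α →. β} {n : ℕ} {u : Fin n → α} {v : Fin n → β}
    (h : ∀ i, v i ∈ f (u i)) : List.ofFn v ∈ f.listMap (List.ofFn u) := by
  rw [mem_listMap_iff, List.forall₂_iff_get]
  simpa using fun i hi => h ⟨i, hi⟩

theorem listMap_reverse_take_succ (f : α →. β) (l : List α) {y : ℕ} (hy : y < l.length) :
    f.listMap (l.take (y + 1)).reverse =
      (f.listMap (l.take y).reverse).bind fun σ => (f l[y]).map (· :: σ) := by
  rw [List.take_succ_eq_append_getElem hy, List.reverse_append]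
  rfl

end PFun

open Computable in
theorem Partrec.listMap {α β : Type*} [Primcodable α] [Primcodable β] {f : α →. β}
    (hf : Partrec f) : Partrec f.listMap := by
  have step : Partrec₂ fun (τ : List α) (p : ℕ × List β) =>
      (τ.reverse[p.1]? : Part α).bind fun a => (f a).map (· :: p.2) := by
    have hget : Computable fun x : List α × (ℕ × List β) => x.1.reverse[x.2.1]? :=
      list_getElem?.comp (list_reverse.comp fst) (fst.comp snd)
    have hcons : Computable₂ fun (x : List α × (ℕ × List β)) (b : β) => b :: x.2.2 :=
      list_cons.comp snd (snd.comp (snd.comp fst))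
    exact hget.ofOption.bind ((hf.comp snd).map (hcons.comp (fst.comp fst) snd))
  -- `nat_rec` walks through `τ` from the back, prepending the image of one letter per step.
  refine (Partrec.nat_rec list_length (Partrec.const' (Part.some [])) step).of_eq fun τ => ?_
  suffices h : ∀ y ≤ τ.length, Nat.rec (Part.some []) (fun y IH => IH.bind fun σ =>
      (τ.reverse[y]? : Part α).bind fun a => (f a).map (· :: σ)) y =
      f.listMap (τ.reverse.take y).reverse by
    simpa [List.take_of_length_le] using h _ le_rfl
  intro y hy
  induction y with
  | zero => rfl
  | succ y ih =>
    have hy' : y < τ.reverse.length := by simpa using hy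
    simp only [ih (by omega), f.listMap_reverse_take_succ _ hy', List.getElem?_eq_getElem hy',
      Part.coe_some, Part.bind_some]

theorem prefixFree_preimage_listMap {α β : Type*} (f : α →. β) {S : Set (List β)}
    (hS : prefixFree S) : prefixFree (f.listMap.preimage S) := by
  rintro τ ⟨σ, hσS, hσ⟩ τ' ⟨σ', hσ'S, hσ'⟩ hτ
  refine hτ.eq_of_length ?_
  rw [← PFun.length_eq_of_mem_listMap hσ, ← PFun.length_eq_of_mem_listMap hσ',
    hS σ hσS σ' hσ'S (PFun.prefix_of_mem_listMap hτ hσ hσ')]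

theorem tsum_preimage_listMap_singleton {α β : Type*} (f : α →. β) (p : α → ℝ≥0∞)
    (σ : List β) :
    ∑' τ : f.listMap.preimage {σ}, ((τ : List α).map p).prod =
      (σ.map fun b => ∑' a : f.preimage {b}, p a).prod := by
  induction σ with
  | nil =>
    have hnil : f.listMap.preimage {[]} = {[]} := by
      ext τ
      simp [PFun.mem_listMap_iff]
    rw [hnil]
    exact tsum_singleton [] fun τ => (τ.map p).prod
  | cons b σ ih =>
    have hbij : Function.Bijective fun x : f.preimage {b} × f.listMap.preimage {σ} =>
        (⟨x.1.1 :: x.2.1, (f.listMap.mem_preimage_singleton _ _).2 <|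
          PFun.cons_mem_listMap ((f.mem_preimage_singleton _ _).1 x.1.2)
            ((f.listMap.mem_preimage_singleton _ _).1 x.2.2)⟩ : f.listMap.preimage {b :: σ}) := by
      refine ⟨fun x y hxy => ?_, fun ⟨τ, hτ⟩ => ?_⟩
      · simp only [Subtype.mk.injEq, List.cons.injEq] at hxy
        exact Prod.ext (Subtype.ext hxy.1) (Subtype.ext hxy.2)
      · obtain ⟨a, τ', hb, hσ, rfl⟩ :=
          PFun.cons_mem_listMap_iff.1 ((f.listMap.mem_preimage_singleton _ _).1 hτ)
        exact ⟨(⟨a, (f.mem_preimage_singleton _ _).2 hb⟩,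
          ⟨τ', (f.listMap.mem_preimage_singleton _ _).2 hσ⟩), rfl⟩
    rw [← (Equiv.ofBijective _ hbij).tsum_eq, ENNReal.tsum_prod', List.map_cons, List.prod_cons,
      ← ih, ← ENNReal.tsum_mul_right]
    simp [ENNReal.tsum_mul_left]

theorem REPred.exists_mem_partrec {α β : Type*} [Primcodable α] [Primcodable β] {p : β → Prop}
    {g : α →. β} (hp : REPred p) (hg : Partrec g) : REPred fun a => ∃ b ∈ g a, p b :=
  have hp' : Partrec₂ fun (_ : α) b => Part.assert (p b) fun _ => Part.some () :=
    hp.comp Computable.snd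
  (hg.bind hp').dom_re.of_eq fun a => by
    simp only [Part.dom_iff_mem, Part.mem_bind_iff, Part.mem_assert_iff, Part.mem_some_iff]
    aesop

def testPreimage {α β : Type*} (f : α →. β) (C : Set (ℕ × List β)) : Set (ℕ × List α) :=
  {p | p.2 ∈ f.listMap.preimage {σ | (p.1, σ) ∈ C}}

open Computable in
theorem REPred.testPreimage {α β : Type*} [Primcodable α] [Primcodable β] {f : α →. β}
    {C : Set (ℕ × List β)} (hC : REPred (· ∈ C)) (hf : Partrec f) :
    REPred (· ∈ testPreimage f C) :=
  (hC.exists_mem_partrec ((hf.listMap.comp snd).map (pair (fst.comp fst) snd).to₂)).of_eq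
    fun p => by simp [_root_.testPreimage, PFun.mem_preimage, and_comm]

theorem ofReal_strP_s17 {Γ : Type*} {P : Γ → ℝ} {σ : List Γ} (h : ∀ a ∈ σ, 0 ≤ P a) :
    ENNReal.ofReal (strP P σ) = (σ.map fun a => ENNReal.ofReal (P a)).prod := by
  induction σ with
  | nil => simp [strP]
  | cons a σ ih =>
    simp only [strP, List.map_cons, List.prod_cons] at ih ⊢
    rw [ENNReal.ofReal_mul (h a List.mem_cons_self), ih fun b hb => h b (List.mem_cons_of_mem _ hb)]

theorem mOpen_preimage_listMap_le {Γ Γ' : Type*} {Ω : Set Γ} {Ω' : Set Γ'} {P : Γ → ℝ}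
    {f : Γ →. Γ'} {Q : Γ' → ℝ} (hP : ∀ a ∈ Ω, 0 ≤ P a) (hf : ∀ a, (f a).Dom → a ∈ Ω)
    (hQ : ∀ x ∈ Ω', HasSum (fun a : {a | a ∈ Ω ∧ x ∈ f a} => P a) (Q x))
    {S : Set (List Γ')} (hS : ∀ σ ∈ S, strIn Ω' σ) :
    mOpen P (f.listMap.preimage S) ≤ mOpen Q S := by
  have hfiber : ∀ x ∈ Ω', ∑' a : f.preimage {x}, ENNReal.ofReal (P a) = ENNReal.ofReal (Q x) := by
    intro x hx
    have hfx : f.preimage {x} = {a | a ∈ Ω ∧ x ∈ f a} := by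
      ext a
      simpa [PFun.mem_preimage_singleton] using fun h => hf a (Part.dom_iff_mem.2 ⟨x, h⟩)
    rw [hfx, ← (hQ x hx).tsum_eq,
      ENNReal.ofReal_tsum_of_nonneg (fun a => hP _ a.2.1) (hQ x hx).summable]
  have hstrQ : ∀ σ ∈ S, ENNReal.ofReal (strP Q σ) =
      ∑' τ : f.listMap.preimage {σ}, ENNReal.ofReal (strP P τ) := by
    intro σ hσ
    rw [ofReal_strP_s17 fun x hx => (hQ x (hS σ hσ x hx)).nonneg fun a => hP _ a.2.1,
      List.map_congr_left fun x hx => (hfiber x (hS σ hσ x hx)).symm,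
      ← tsum_preimage_listMap_singleton f fun a => ENNReal.ofReal (P a)]
    refine tsum_congr fun τ => (ofReal_strP_s17 fun a ha => hP a (hf a ?_)).symm
    exact PFun.dom_of_mem_listMap ((f.listMap.mem_preimage_singleton _ _).1 τ.2) ha
  calc mOpen P (f.listMap.preimage S)
      = ∑' τ : ⋃ σ ∈ S, f.listMap.preimage {σ}, ENNReal.ofReal (strP P τ) :=
        tsum_congr_set_coe (fun τ => ENNReal.ofReal (strP P τ)) (by ext; simp [PFun.mem_preimage])
    _ ≤ ∑' σ : S, ∑' τ : f.listMap.preimage {(σ : List Γ')}, ENNReal.ofReal (strP P τ) :=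
        ENNReal.tsum_biUnion_le_tsum (fun τ => ENNReal.ofReal (strP P τ)) S
          fun σ => f.listMap.preimage {σ}
    _ = mOpen Q S := tsum_congr fun σ => (hstrQ σ σ.2).symm

theorem isTestSet_testPreimage {Γ Γ' : Type*} {Ω : Set Γ} {Ω' : Set Γ'} {P : Γ → ℝ}
    {f : Γ →. Γ'} {Q : Γ' → ℝ} (hP : ∀ a ∈ Ω, 0 ≤ P a) (hf : ∀ a, (f a).Dom → a ∈ Ω)
    (hQ : ∀ x ∈ Ω', HasSum (fun a : {a | a ∈ Ω ∧ x ∈ f a} => P a) (Q x))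
    {C : Set (ℕ × List Γ')} (hC : isTestSet Ω' Q C) : isTestSet Ω P (testPreimage f C) := by
  refine ⟨fun ⟨n, τ⟩ ⟨σ, _, hσ⟩ a ha => hf a (PFun.dom_of_mem_listMap hσ ha), fun n hn => ?_⟩
  exact ⟨prefixFree_preimage_listMap f (hC.2 n hn).1,
    (mOpen_preimage_listMap_le hP hf hQ fun σ hσ => hC.1 _ hσ).trans_lt (hC.2 n hn).2⟩

theorem pre_mem_listMap {Γ Γ' : Type*} {f : Γ →. Γ'} {α : ℕ → Γ} {β : ℕ → Γ'}
    (h : ∀ k, β k ∈ f (α k)) (n : ℕ) : pre β n ∈ f.listMap (pre α n) :=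
  PFun.ofFn_mem_listMap fun i => h i

theorem stmt17_general (Ω Ω' : Set ℕ)
    (P : ℕ → ℝ) (hP : isProb Ω P)
    (X : ℕ →. ℕ) (hXcomp : Partrec X) (hXdom : ∀ a, (X a).Dom ↔ a ∈ Ω)
    (Q : ℕ → ℝ) (hQ : ∀ x ∈ Ω', HasSum (fun a : {a | a ∈ Ω ∧ x ∈ X a} => P (a : ℕ)) (Q x))
    (α : ℕ → ℕ) (hrand : MLRandom Ω P α)
    (β : ℕ → ℕ) (hβ : ∀ k, β k ∈ X (α k)) :
    MLRandom Ω' Q β := by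
  intro C hC
  have hD : MLTest Ω P (testPreimage X C) :=
    ⟨hC.1.testPreimage hXcomp, isTestSet_testPreimage hP.1 (fun a => (hXdom a).1) hQ hC.2⟩
  obtain ⟨n, hn, hα⟩ := hrand _ hD
  exact ⟨n, hn, fun ⟨m, hm⟩ => hα ⟨m, _, hm, pre_mem_listMap hβ m⟩⟩

/-- Closure of ensembles under the mapping by a random variable:
if `X : Ω → Ω'` is a partial recursive function with domain exactly `Ω` and `α` is
Martin-Löf `P`-random, then the pointwise image sequence `β` (with `β k` the value
of `X` at `α k`) is Martin-Löf `X(P)`-random, where `X(P)(x) = P(X⁻¹({x}))`. -/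
theorem stmt17 (Ω Ω' : Set ℕ) (hre : REPred (· ∈ Ω)) (hinf : Ω.Infinite)
    (hre' : REPred (· ∈ Ω')) (hinf' : Ω'.Infinite)
    (P : ℕ → ℝ) (hP : isProb Ω P)
    (X : ℕ →. ℕ) (hXcomp : Partrec X) (hXdom : ∀ a, (X a).Dom ↔ a ∈ Ω)
    (hXrange : ∀ a ∈ Ω, ∀ y ∈ X a, y ∈ Ω')
    (Q : ℕ → ℝ) (hQ : ∀ x ∈ Ω', HasSum (fun a : {a | a ∈ Ω ∧ x ∈ X a} => P (a : ℕ)) (Q x))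
    (α : ℕ → ℕ) (hα : seqIn Ω α) (hrand : MLRandom Ω P α)
    (β : ℕ → ℕ) (hβ : ∀ k, β k ∈ X (α k)) :
    MLRandom Ω' Q β :=
  stmt17_general Ω Ω' P hP X hXcomp hXdom Q hQ α hrand β hβ
end
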